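/- Let G=(V,E,w) be a weighted (dissimilarity) graph on n vertices and ε > 0. Call a cluster tree T a recursive ε-locally-densest-cut tree for G if either |V| = 1, or the cut (V(A),V(B)) induced by the two children A,B of the root is an ε/|V|-locally-densest cut of G, and the subtrees rooted at A and B are recursive ε-locally-densest-cut trees for G[V(A)] and G[V(B)] respectively. Then every recursive ε-locally-densest-cut tree T satisfies val(T) ≥ (2n/3)·(1−ε)·Σ_{e∈E} w(e) ≥ (2/3)·(1−ε)·OPT. -/

import Mathlib

open scoped BigOperators

attribute [local instance] Classical.propDecidable

noncomputable section

/-! ### Cluster trees -/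

/-- A (binary, rooted) hierarchical-clustering tree whose leaves are labelled by
vertices of `V`. -/
inductive ClusterTree (V : Type) : Type where
  | leaf : V → ClusterTree V
  | node : ClusterTree V → ClusterTree V → ClusterTree V

namespace ClusterTree

variable {V : Type}

/-- The list of leaf labels of the tree (left-to-right). -/
def leavesList : ClusterTree V → List V
  | leaf v => [v]
  | node L R => leavesList L ++ leavesList R

/-- The set of leaf labels of the tree. -/
def leaves [DecidableEq V] (T : ClusterTree V) : Finset V :=
  T.leavesList.toFinset

end ClusterTree

section Defs

variable {V : Type}

/-- `T` is a cluster tree for the whole (finite) vertex set `V`: its leaves are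
pairwise distinct and exhaust the vertices. -/
def IsClusterTree [DecidableEq V] [Fintype V] (T : ClusterTree V) : Prop :=
  T.leavesList.Nodup ∧ T.leaves = Finset.univ

/-- `IsSubtreeOf s T` : `s` occurs as a rooted subtree of `T`. -/
def IsSubtreeOf : ClusterTree V → ClusterTree V → Prop
  | s, ClusterTree.leaf v => s = ClusterTree.leaf v
  | s, ClusterTree.node L R => s = ClusterTree.node L R ∨ IsSubtreeOf s L ∨ IsSubtreeOf s R

/-- The subtree of `T` rooted at the lowest common ancestor of the leaves `x` and `y`. -/
def lcaSubtree [DecidableEq V] : ClusterTree V → V → V → ClusterTree V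
  | ClusterTree.leaf v, _, _ => ClusterTree.leaf v
  | ClusterTree.node L R, x, y =>
    if x ∈ L.leaves ∧ y ∈ L.leaves then lcaSubtree L x y
    else if x ∈ R.leaves ∧ y ∈ R.leaves then lcaSubtree R x y
    else ClusterTree.node L R

/-- `w(A, B) = ∑_{a ∈ A, b ∈ B} w a b`. -/
def cutWeight (w : V → V → ℝ) (A B : Finset V) : ℝ := ∑ a ∈ A, ∑ b ∈ B, w a b

/-- `w(A) = ∑_{a, b ∈ A} w a b` (ordered pairs; each edge counted twice). -/
def innerWeight (w : V → V → ℝ) (A : Finset V) : ℝ := ∑ a ∈ A, ∑ b ∈ A, w a b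

/-- `∑_{e ∈ E} w(e)`, for a symmetric weight function with zero diagonal. -/
def totalWeight [Fintype V] (w : V → V → ℝ) : ℝ := (∑ u : V, ∑ v : V, w u v) / 2

/-- Cost of a cluster tree: each internal node `N` with children `N₁, N₂`
contributes `w(V(N₁), V(N₂)) · g(|V(N₁)|, |V(N₂)|)`. -/
def treeCost [DecidableEq V] (w : V → V → ℝ) (g : ℕ → ℕ → ℝ) : ClusterTree V → ℝ
  | ClusterTree.leaf _ => 0
  | ClusterTree.node L R =>
      cutWeight w L.leaves R.leaves * g L.leaves.card R.leaves.card
        + treeCost w g L + treeCost w g R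

/-- Dasgupta's cost (= `treeCost` with `g (a, b) = a + b`). -/
def dasguptaCost [DecidableEq V] (w : V → V → ℝ) : ClusterTree V → ℝ
  | ClusterTree.leaf _ => 0
  | ClusterTree.node L R =>
      ((L.leaves.card + R.leaves.card : ℕ) : ℝ) * cutWeight w L.leaves R.leaves
        + dasguptaCost w L + dasguptaCost w R

/-! ### Generating trees -/

/-- `T` is a generating tree for the similarity graph `w` : there is a nonnegative
weight function on the internal nodes, non-increasing from leaves towards the root,
realizing every edge weight at the corresponding LCA. -/
def IsGenerating [DecidableEq V] (w : V → V → ℝ) (T : ClusterTree V) : Prop :=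
  ∃ W : ClusterTree V → ℝ,
    (∀ s, IsSubtreeOf s T → 0 ≤ W s) ∧
    (∀ L R, IsSubtreeOf (ClusterTree.node L R) T →
      ∀ s, IsSubtreeOf s L ∨ IsSubtreeOf s R → W (ClusterTree.node L R) ≤ W s) ∧
    (∀ x y, x ∈ T.leaves → y ∈ T.leaves → x ≠ y → w x y = W (lcaSubtree T x y))

/-- Generating tree in the dissimilarity setting (weights non-decreasing from
leaves towards the root). -/
def IsGeneratingDissim [DecidableEq V] (w : V → V → ℝ) (T : ClusterTree V) : Prop :=
  ∃ W : ClusterTree V → ℝ,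
    (∀ s, IsSubtreeOf s T → 0 ≤ W s) ∧
    (∀ L R, IsSubtreeOf (ClusterTree.node L R) T →
      ∀ s, IsSubtreeOf s L ∨ IsSubtreeOf s R → W s ≤ W (ClusterTree.node L R)) ∧
    (∀ x y, x ∈ T.leaves → y ∈ T.leaves → x ≠ y → w x y = W (lcaSubtree T x y))

/-- Strictly generating tree (similarity setting). -/
def IsStrictlyGenerating [DecidableEq V] (w : V → V → ℝ) (T : ClusterTree V) : Prop :=
  ∃ W : ClusterTree V → ℝ,
    (∀ s, IsSubtreeOf s T → 0 ≤ W s) ∧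
    (∀ L R, IsSubtreeOf (ClusterTree.node L R) T →
      ∀ s, IsSubtreeOf s L ∨ IsSubtreeOf s R → W (ClusterTree.node L R) < W s) ∧
    (∀ x y, x ∈ T.leaves → y ∈ T.leaves → x ≠ y → w x y = W (lcaSubtree T x y))

/-- Strictly generating tree (dissimilarity setting). -/
def IsStrictlyGeneratingDissim [DecidableEq V] (w : V → V → ℝ) (T : ClusterTree V) : Prop :=
  ∃ W : ClusterTree V → ℝ,
    (∀ s, IsSubtreeOf s T → 0 ≤ W s) ∧
    (∀ L R, IsSubtreeOf (ClusterTree.node L R) T →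
      ∀ s, IsSubtreeOf s L ∨ IsSubtreeOf s R → W s < W (ClusterTree.node L R)) ∧
    (∀ x y, x ∈ T.leaves → y ∈ T.leaves → x ≠ y → w x y = W (lcaSubtree T x y))

/-! ### Ultrametrics and ground-truth inputs -/

/-- `d` is an ultrametric on `V`. -/
def IsUltrametric (d : V → V → ℝ) : Prop :=
  (∀ x, d x x = 0) ∧ (∀ x y, d x y = 0 → x = y) ∧ (∀ x y, d x y = d y x) ∧
  (∀ x y, 0 ≤ d x y) ∧ (∀ x y z, d x y ≤ max (d x z) (d y z))

/-- `w` is a similarity graph generated from an ultrametric via a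
non-increasing nonnegative function `f`. -/
def GeneratedFromUltrametric (w : V → V → ℝ) : Prop :=
  ∃ (d : V → V → ℝ) (f : ℝ → ℝ),
    IsUltrametric d ∧
    (∀ a b : ℝ, 0 ≤ a → a ≤ b → f b ≤ f a) ∧
    (∀ a : ℝ, 0 ≤ a → 0 ≤ f a) ∧
    (∀ x y : V, x ≠ y → w x y = f (d x y))

/-- `w` is a dissimilarity graph generated from an ultrametric via a
non-decreasing nonnegative function `f`. -/
def GeneratedFromUltrametricDissim (w : V → V → ℝ) : Prop :=
  ∃ (d : V → V → ℝ) (f : ℝ → ℝ),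
    IsUltrametric d ∧
    (∀ a b : ℝ, 0 ≤ a → a ≤ b → f a ≤ f b) ∧
    (∀ a : ℝ, 0 ≤ a → 0 ≤ f a) ∧
    (∀ x y : V, x ≠ y → w x y = f (d x y))

/-- `w` is a similarity graph generated from a *minimal* ultrametric:
pairs with equal weights are at equal ultrametric distance. -/
def GeneratedFromMinimalUltrametric (w : V → V → ℝ) : Prop :=
  ∃ (d : V → V → ℝ) (f : ℝ → ℝ),
    IsUltrametric d ∧
    (∀ a b : ℝ, 0 ≤ a → a ≤ b → f b ≤ f a) ∧
    (∀ a : ℝ, 0 ≤ a → 0 ≤ f a) ∧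
    (∀ x y : V, x ≠ y → w x y = f (d x y)) ∧
    (∀ u v u' v' : V, u ≠ v → u' ≠ v' → f (d u v) = f (d u' v') → d u v = d u' v')

/-- Dissimilarity analogue of `GeneratedFromMinimalUltrametric`. -/
def GeneratedFromMinimalUltrametricDissim (w : V → V → ℝ) : Prop :=
  ∃ (d : V → V → ℝ) (f : ℝ → ℝ),
    IsUltrametric d ∧
    (∀ a b : ℝ, 0 ≤ a → a ≤ b → f a ≤ f b) ∧
    (∀ a : ℝ, 0 ≤ a → 0 ≤ f a) ∧
    (∀ x y : V, x ≠ y → w x y = f (d x y)) ∧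
    (∀ u v u' v' : V, u ≠ v → u' ≠ v' → f (d u v) = f (d u' v') → d u v = d u' v')

/-- `w` is a `δ`-adversarially-perturbed (similarity) ground-truth input. -/
def IsDeltaPerturbedGroundTruth (w : V → V → ℝ) (δ : ℝ) : Prop :=
  ∃ (d : V → V → ℝ) (f : ℝ → ℝ),
    IsUltrametric d ∧
    (∀ a b : ℝ, 0 ≤ a → a ≤ b → f b ≤ f a) ∧
    (∀ a : ℝ, 0 ≤ a → 0 ≤ f a) ∧
    (∀ x y : V, x ≠ y → f (d x y) ≤ w x y ∧ w x y ≤ δ * f (d x y))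

end Defs

/-- The unit-weight clique on `V`. -/
def cliqueW (V : Type) [DecidableEq V] : V → V → ℝ := fun x y => if x = y then 0 else 1

/-- Admissibility of a cost function (similarity setting): on every similarity graph
generated from a minimal ultrametric, a cluster tree minimizes the cost
iff it is a generating tree. -/
def Admissible (g : ℕ → ℕ → ℝ) : Prop :=
  ∀ (V : Type) [Fintype V] [DecidableEq V] (w : V → V → ℝ),
    GeneratedFromMinimalUltrametric w →
    ∀ T : ClusterTree V, IsClusterTree T →
      ((∀ T' : ClusterTree V, IsClusterTree T' → treeCost w g T ≤ treeCost w g T')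
        ↔ IsGenerating w T)

/-- Admissibility of a value function (dissimilarity setting): on every dissimilarity
graph generated from a minimal ultrametric, a cluster tree maximizes the value
iff it is a generating tree. -/
def AdmissibleDissim (g : ℕ → ℕ → ℝ) : Prop :=
  ∀ (V : Type) [Fintype V] [DecidableEq V] (w : V → V → ℝ),
    GeneratedFromMinimalUltrametricDissim w →
    ∀ T : ClusterTree V, IsClusterTree T →
      ((∀ T' : ClusterTree V, IsClusterTree T' → treeCost w g T' ≤ treeCost w g T)
        ↔ IsGeneratingDissim w T)

/-! ### Agglomerative (linkage) algorithms, modelled as a nondeterministic relation -/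

/-- The initial state of an agglomerative algorithm: all singleton trees. -/
def initState (V : Type) [Fintype V] : Multiset (ClusterTree V) :=
  Finset.univ.val.map ClusterTree.leaf

/-- One merge step of a generic linkage algorithm: merge two candidate trees whose
leaf-set distance `D` is best (w.r.t. `better a b` = "`a` is at least as good as `b`")
among all candidate pairs; any tie-breaking choice is allowed. -/
inductive MergeStep {V : Type} [DecidableEq V] (D : Finset V → Finset V → ℝ)
    (better : ℝ → ℝ → Prop) :
    Multiset (ClusterTree V) → Multiset (ClusterTree V) → Prop where
  | step : ∀ (rest : Multiset (ClusterTree V)) (T1 T2 : ClusterTree V),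
      (∀ (T1' T2' : ClusterTree V) (rest' : Multiset (ClusterTree V)),
          T1 ::ₘ T2 ::ₘ rest = T1' ::ₘ T2' ::ₘ rest' →
          better (D T1.leaves T2.leaves) (D T1'.leaves T2'.leaves)) →
      MergeStep D better (T1 ::ₘ T2 ::ₘ rest) (ClusterTree.node T1 T2 ::ₘ rest)

/-- `T` is a possible output of the linkage algorithm with dissimilarity/similarity
measure `D` and preference `better`. -/
def IsLinkageOutput {V : Type} [Fintype V] [DecidableEq V]
    (D : Finset V → Finset V → ℝ) (better : ℝ → ℝ → Prop) (T : ClusterTree V) : Prop :=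
  Relation.ReflTransGen (MergeStep D better) (initState V) {T}

/-- Average-linkage measure. -/
def avgDist {V : Type} (w : V → V → ℝ) (A B : Finset V) : ℝ :=
  cutWeight w A B / ((A.card : ℝ) * (B.card : ℝ))

/-- Single-linkage measure: `min_{x ∈ A, y ∈ B} w x y`. -/
def minLinkDist {V : Type} [DecidableEq V] (w : V → V → ℝ) (A B : Finset V) : ℝ :=
  WithTop.untopD 0 (((A ×ˢ B).image fun p => w p.1 p.2).min)

/-- Complete-linkage measure: `max_{x ∈ A, y ∈ B} w x y`. -/
def maxLinkDist {V : Type} [DecidableEq V] (w : V → V → ℝ) (A B : Finset V) : ℝ :=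
  WithBot.unbotD 0 (((A ×ˢ B).image fun p => w p.1 p.2).max)

/-! ### Cuts -/

section Cuts

variable {V : Type}

/-- `A ⊕ x` : add `x` to `A` if absent, remove it if present. -/
def symmDiffV [DecidableEq V] (A : Finset V) (x : V) : Finset V :=
  if x ∈ A then A.erase x else insert x A

/-- `(A, B)` is an `ε/|A ∪ B|`-locally-densest cut of the induced subgraph on `A ∪ B`. -/
def IsLocallyDensestCut [DecidableEq V] (w : V → V → ℝ) (ε : ℝ) (A B : Finset V) : Prop :=
  ∀ x ∈ A ∪ B,
    cutWeight w (symmDiffV A x) (symmDiffV B x) /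
        (((symmDiffV A x).card : ℝ) * ((symmDiffV B x).card : ℝ)) ≤
      (1 + ε / ((A ∪ B).card : ℝ)) *
        (cutWeight w A B / ((A.card : ℝ) * (B.card : ℝ)))

/-- Cluster trees obtained by recursively splitting along `ε/n`-locally-densest cuts. -/
def IsRecLocallyDensestCutTree [DecidableEq V] (w : V → V → ℝ) (ε : ℝ) :
    ClusterTree V → Prop
  | ClusterTree.leaf _ => True
  | ClusterTree.node L R =>
      IsLocallyDensestCut w ε L.leaves R.leaves ∧
      IsRecLocallyDensestCutTree w ε L ∧ IsRecLocallyDensestCutTree w ε R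

/-- Cluster trees obtained by recursively splitting along `φ`-approximate sparsest cuts. -/
def IsRecApproxSparsestCutTree [DecidableEq V] (w : V → V → ℝ) (φ : ℝ) :
    ClusterTree V → Prop
  | ClusterTree.leaf _ => True
  | ClusterTree.node L R =>
      (∀ S : Finset V, S ⊆ L.leaves ∪ R.leaves → S.Nonempty → S ⊂ L.leaves ∪ R.leaves →
        cutWeight w L.leaves R.leaves / ((L.leaves.card : ℝ) * (R.leaves.card : ℝ)) ≤
          φ * (cutWeight w S ((L.leaves ∪ R.leaves) \ S) /
            ((S.card : ℝ) * (((L.leaves ∪ R.leaves) \ S).card : ℝ)))) ∧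
      IsRecApproxSparsestCutTree w φ L ∧ IsRecApproxSparsestCutTree w φ R

/-- Cluster trees obtained by recursively splitting along exact sparsest cuts. -/
def IsRecSparsestCutTree [DecidableEq V] (w : V → V → ℝ) : ClusterTree V → Prop
  | ClusterTree.leaf _ => True
  | ClusterTree.node L R =>
      (∀ S : Finset V, S ⊆ L.leaves ∪ R.leaves → S.Nonempty → S ⊂ L.leaves ∪ R.leaves →
        cutWeight w L.leaves R.leaves / ((L.leaves.card : ℝ) * (R.leaves.card : ℝ)) ≤
          cutWeight w S ((L.leaves ∪ R.leaves) \ S) /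
            ((S.card : ℝ) * (((L.leaves ∪ R.leaves) \ S).card : ℝ))) ∧
      IsRecSparsestCutTree w L ∧ IsRecSparsestCutTree w R

/-- Cluster trees obtained by recursively splitting along exact densest cuts. -/
def IsRecDensestCutTree [DecidableEq V] (w : V → V → ℝ) : ClusterTree V → Prop
  | ClusterTree.leaf _ => True
  | ClusterTree.node L R =>
      (∀ S : Finset V, S ⊆ L.leaves ∪ R.leaves → S.Nonempty → S ⊂ L.leaves ∪ R.leaves →
        cutWeight w S ((L.leaves ∪ R.leaves) \ S) /
            ((S.card : ℝ) * (((L.leaves ∪ R.leaves) \ S).card : ℝ)) ≤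
          cutWeight w L.leaves R.leaves / ((L.leaves.card : ℝ) * (R.leaves.card : ℝ))) ∧
      IsRecDensestCutTree w L ∧ IsRecDensestCutTree w R

/-- Cluster trees produced by the bisection 2-Center algorithm (similarity setting). -/
def IsBisection2CenterTree [DecidableEq V] (w : V → V → ℝ) : ClusterTree V → Prop
  | ClusterTree.leaf _ => True
  | ClusterTree.node L R =>
      (∃ u ∈ L.leaves ∪ R.leaves, ∃ v ∈ L.leaves ∪ R.leaves, u ≠ v ∧
        (∃ r : ℝ,
          (∀ x ∈ L.leaves ∪ R.leaves, r ≤ max (w x u) (w x v)) ∧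
          (∀ u' ∈ L.leaves ∪ R.leaves, ∀ v' ∈ L.leaves ∪ R.leaves, u' ≠ v' →
            ∃ x ∈ L.leaves ∪ R.leaves, max (w x u') (w x v') ≤ r)) ∧
        L.leaves = (L.leaves ∪ R.leaves).filter fun x => w x v ≤ w x u) ∧
      IsBisection2CenterTree w L ∧ IsBisection2CenterTree w R

/-- Cluster trees produced by the bisection 2-Center algorithm (dissimilarity setting). -/
def IsBisection2CenterTreeDissim [DecidableEq V] (w : V → V → ℝ) : ClusterTree V → Prop
  | ClusterTree.leaf _ => True
  | ClusterTree.node L R =>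
      (∃ u ∈ L.leaves ∪ R.leaves, ∃ v ∈ L.leaves ∪ R.leaves, u ≠ v ∧
        (∃ r : ℝ,
          (∀ x ∈ L.leaves ∪ R.leaves, min (w x u) (w x v) ≤ r) ∧
          (∀ u' ∈ L.leaves ∪ R.leaves, ∀ v' ∈ L.leaves ∪ R.leaves, u' ≠ v' →
            ∃ x ∈ L.leaves ∪ R.leaves, r ≤ min (w x u') (w x v'))) ∧
        L.leaves = (L.leaves ∪ R.leaves).filter fun x => w x u ≤ w x v) ∧
      IsBisection2CenterTreeDissim w L ∧ IsBisection2CenterTreeDissim w R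

end Cuts

/-! ### Pivot algorithms -/

mutual
/-- Trees produced by the fast pivot algorithm (Algorithm 6 of CKMM):
pick a pivot `p`, split the other vertices into classes of equal similarity to `p`
(in strictly decreasing order of similarity), recurse, and attach along a spine. -/
inductive IsPivotTree {V : Type} [DecidableEq V] (w : V → V → ℝ) : ClusterTree V → Prop where
  | mk : ∀ (p : V) (T : ClusterTree V), PivotSpine w p T → IsPivotTree w T

/-- The spine of the pivot algorithm: `PivotSpine w p T` says that `T` is an iterated
union of the single-vertex tree on `p` with pivot trees of the similarity classes of
`p`, attached in strictly decreasing order of similarity to `p`. -/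
inductive PivotSpine {V : Type} [DecidableEq V] (w : V → V → ℝ) : V → ClusterTree V → Prop where
  | base : ∀ p : V, PivotSpine w p (ClusterTree.leaf p)
  | step : ∀ (p : V) (S T : ClusterTree V) (c : ℝ),
      PivotSpine w p S → IsPivotTree w T →
      (∀ v ∈ T.leaves, w p v = c) →
      (∀ u ∈ S.leaves, u ≠ p → c < w p u) →
      PivotSpine w p (ClusterTree.node S T)
end

mutual
/-- Trees produced by the robust pivot algorithm (Algorithm 7 of CKMM). -/
inductive IsRobustPivotTree {V : Type} [DecidableEq V] (w : V → V → ℝ) :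
    ClusterTree V → Prop where
  | mk : ∀ (p : V) (T : ClusterTree V), RobustPivotSpine w T.leaves p T →
      IsRobustPivotTree w T

/-- `RobustPivotSpine w U p T` : `T` is a prefix (a spine) of a run of the robust pivot
algorithm on the vertex set `U`, started at the pivot `p`.  At each step, `wi` is the
maximum weight of an edge in the cut `(Ṽ, U \ Ṽ)` (where `Ṽ` is the set of already
clustered vertices), and the next block is the least subset of `U \ Ṽ` closed under
adding any vertex having an edge of weight at least `wi` into the block or into `Ṽ`. -/
inductive RobustPivotSpine {V : Type} [DecidableEq V] (w : V → V → ℝ) :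
    Finset V → V → ClusterTree V → Prop where
  | base : ∀ (U : Finset V) (p : V), RobustPivotSpine w U p (ClusterTree.leaf p)
  | step : ∀ (U : Finset V) (p : V) (S T : ClusterTree V) (wi : ℝ),
      RobustPivotSpine w U p S →
      IsRobustPivotTree w T →
      (∃ p1 ∈ S.leaves, ∃ p2 ∈ U \ S.leaves, w p1 p2 = wi) →
      (∀ q1 ∈ S.leaves, ∀ q2 ∈ U \ S.leaves, w q1 q2 ≤ wi) →
      T.leaves ⊆ U \ S.leaves →
      (∀ u ∈ U \ S.leaves, (∃ v ∈ T.leaves ∪ S.leaves, wi ≤ w u v) → u ∈ T.leaves) →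
      (∀ C : Finset V, C ⊆ U \ S.leaves →
        (∀ u ∈ U \ S.leaves, (∃ v ∈ C ∪ S.leaves, wi ≤ w u v) → u ∈ C) →
        T.leaves ⊆ C) →
      RobustPivotSpine w U p (ClusterTree.node S T)
end

/-! ### Paths and caterpillars -/

/-- Attach the leaves from the list `l` one by one on top of `t` (a "spine"). -/
def spineTree {V : Type} : ClusterTree V → List V → ClusterTree V
  | t, [] => t
  | t, v :: vs => spineTree (ClusterTree.node t (ClusterTree.leaf v)) vs

/-- The unit-weight path on `n` vertices. -/
def pathW (n : ℕ) (i j : Fin n) : ℝ :=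
  if (i : ℕ) + 1 = (j : ℕ) ∨ (j : ℕ) + 1 = (i : ℕ) then 1 else 0

/-! ### Random graphs: hierarchical stochastic block model -/

/-- Index set for the potential edges of a graph on `Fin n`. -/
abbrev EdgeIdx (n : ℕ) := {p : Fin n × Fin n // p.1 < p.2}

/-- The (0/1) weight function of the random graph described by the edge
configuration `c`. -/
def configW {n : ℕ} (c : EdgeIdx n → Bool) (u v : Fin n) : ℝ :=
  if h : u < v then (if c ⟨(u, v), h⟩ then 1 else 0)
  else if h' : v < u then (if c ⟨(v, u), h'⟩ then 1 else 0)
  else 0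

/-- The probability of the edge configuration `c` when each edge `e` is present
independently with probability `q e`. -/
def configProb {n : ℕ} (q : Fin n → Fin n → ℝ) (c : EdgeIdx n → Bool) : ℝ :=
  ∏ e : EdgeIdx n, if c e then q e.val.1 e.val.2 else 1 - q e.val.1 e.val.2

/-- The expected cost `E[Γ(T) | ψ]` of a fixed cluster tree `T`, over the random
choice of the edges (with edge probabilities `q`). -/
def expectedCost {n : ℕ} (g : ℕ → ℕ → ℝ) (q : Fin n → Fin n → ℝ)
    (T : ClusterTree (Fin n)) : ℝ :=
  ∑ c : EdgeIdx n → Bool, configProb q c * treeCost (configW c) g T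

/-- The (fixed, size-independent) data of a hierarchical stochastic block model with
`k` bottom-level clusters: a generating tree `Ttil` with weights `Wtil` in `(0,1)`
(the graph `G̃ₖ` on `k` vertices generated from an ultrametric), and intra-cluster
probabilities `p i ∈ (0,1]` exceeding the weight of the parent of leaf `i`. -/
structure HSBM (k : ℕ) where
  Ttil : ClusterTree (Fin k)
  Wtil : ClusterTree (Fin k) → ℝ
  p : Fin k → ℝ
  ttil_isClusterTree : IsClusterTree Ttil
  wtil_pos : ∀ L R, IsSubtreeOf (ClusterTree.node L R) Ttil →
    0 < Wtil (ClusterTree.node L R)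
  wtil_lt_one : ∀ L R, IsSubtreeOf (ClusterTree.node L R) Ttil →
    Wtil (ClusterTree.node L R) < 1
  wtil_mono : ∀ L R, IsSubtreeOf (ClusterTree.node L R) Ttil →
    ∀ s, IsSubtreeOf s L ∨ IsSubtreeOf s R → Wtil (ClusterTree.node L R) ≤ Wtil s
  p_pos : ∀ i, 0 < p i
  p_le_one : ∀ i, p i ≤ 1
  p_gt_parent : ∀ L R, IsSubtreeOf (ClusterTree.node L R) Ttil →
    ∀ i : Fin k, L = ClusterTree.leaf i ∨ R = ClusterTree.leaf i →
      Wtil (ClusterTree.node L R) < p i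

/-- The edge probabilities of the HSBM `M` with sparsity `α`, given the assignment
`ψ` of vertices to bottom-level clusters.  These are also the edge weights of the
expected graph `Ḡ`. -/
def HSBM.edgeProb {k : ℕ} (M : HSBM k) (α : ℝ) {n : ℕ} (ψ : Fin n → Fin k) :
    Fin n → Fin n → ℝ := fun u v =>
  if ψ u = ψ v then α * M.p (ψ u)
  else α * M.Wtil (lcaSubtree M.Ttil (ψ u) (ψ v))

/-- The probability of the sample `ω = (ψ, c)` (labels and edges) of the HSBM `M`
with label proportions `f` and sparsity `α`. -/
def hsbmProb {k : ℕ} (M : HSBM k) (f : Fin k → ℝ) (α : ℝ) {n : ℕ}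
    (ω : (Fin n → Fin k) × (EdgeIdx n → Bool)) : ℝ :=
  (∏ v : Fin n, f (ω.1 v)) * configProb (M.edgeProb α ω.1) ω.2

/-- The common cost `κ(n)` of all cluster trees of the unit-weight clique on `n`
vertices (computed on the caterpillar tree). -/
def cliqueTreeCost (g : ℕ → ℕ → ℝ) (n : ℕ) : ℝ :=
  ∑ i ∈ Finset.range n, (i : ℝ) * g i 1

/-- The smoothness property: `max {g(n₁,n₂) : n₁+n₂ = n} = O(κ(n)/n²)`. -/
def SmoothCost (g : ℕ → ℕ → ℝ) : Prop :=
  ∃ C : ℝ, 0 < C ∧ ∀ n1 n2 : ℕ, 1 ≤ n1 → 1 ≤ n2 →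
    g n1 n2 * (((n1 + n2 : ℕ) : ℝ)) ^ 2 ≤ C * cliqueTreeCost g (n1 + n2)

end

/-!
By induction over the tree, `dasguptaCost w N ≥ (1 - ε)/3 · |V(N)| · w(V(N))`, where `w(V(N))`
counts each edge inside `V(N)` twice. At the root split `(A, B)`, moving a vertex of `A` to `B`
does not raise the density `w(A, B)/(|A||B|)` by more than the factor `1 + ε/n`; summing this
over all vertices of `A` gives `|B| · w(A) ≤ (|A| - 1)(1 + ε) w(A, B)`, and symmetrically for `B`.
These two bounds make the root term `n · w(A, B)` cover the increase of the potential.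
Conversely every cluster tree has value at most `n · Σ_e w(e)`, which gives the comparison with
`OPT`.
-/

namespace ClusterTree

variable {V : Type} [DecidableEq V]

theorem leaves_leaf (v : V) : (leaf v).leaves = {v} := by
  simp [leaves, leavesList]

theorem leaves_node (L R : ClusterTree V) : (node L R).leaves = L.leaves ∪ R.leaves := by
  simp [leaves, leavesList]

theorem leaves_nonempty : ∀ s : ClusterTree V, s.leaves.Nonempty
  | leaf v => ⟨v, by simp [leaves_leaf]⟩
  | node L R => by rw [leaves_node]; exact (leaves_nonempty L).inl

theorem one_le_card_leaves (s : ClusterTree V) : (1 : ℝ) ≤ s.leaves.card := by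
  exact_mod_cast s.leaves_nonempty.card_pos

theorem nodup_node {L R : ClusterTree V} (h : (node L R).leavesList.Nodup) :
    L.leavesList.Nodup ∧ R.leavesList.Nodup ∧ Disjoint L.leaves R.leaves := by
  have h' : (L.leavesList ++ R.leavesList).Nodup := h
  rw [List.nodup_append] at h'
  exact ⟨h'.1, h'.2.1,
    List.disjoint_toFinset_iff_disjoint.mpr fun a ha hb => h'.2.2 a ha a hb rfl⟩

theorem card_leaves_node {L R : ClusterTree V} (h : Disjoint L.leaves R.leaves) :
    ((node L R).leaves.card : ℝ) = L.leaves.card + R.leaves.card := by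
  rw [leaves_node, Finset.card_union_of_disjoint h, Nat.cast_add]

end ClusterTree

section Weights

variable {V : Type} {w : V → V → ℝ}

theorem cutWeight_nonneg (hnonneg : ∀ u v, 0 ≤ w u v) (A B : Finset V) :
    0 ≤ cutWeight w A B :=
  Finset.sum_nonneg fun a _ => Finset.sum_nonneg fun b _ => hnonneg a b

theorem innerWeight_nonneg (hnonneg : ∀ u v, 0 ≤ w u v) (A : Finset V) :
    0 ≤ innerWeight w A :=
  cutWeight_nonneg hnonneg A A

theorem cutWeight_comm (hsym : ∀ u v, w u v = w v u) (A B : Finset V) :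
    cutWeight w A B = cutWeight w B A := by
  rw [cutWeight, Finset.sum_comm]
  exact Finset.sum_congr rfl fun b _ => Finset.sum_congr rfl fun a _ => hsym a b

theorem innerWeight_singleton (hdiag : ∀ v, w v v = 0) (x : V) : innerWeight w {x} = 0 := by
  simp [innerWeight, hdiag]

variable [DecidableEq V]

theorem innerWeight_union (hsym : ∀ u v, w u v = w v u) {A B : Finset V}
    (hd : Disjoint A B) :
    innerWeight w (A ∪ B) = innerWeight w A + innerWeight w B + 2 * cutWeight w A B := by
  have hBA : cutWeight w B A = cutWeight w A B := cutWeight_comm hsym B A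
  simp only [innerWeight, cutWeight] at hBA ⊢
  simp only [Finset.sum_union hd, Finset.sum_add_distrib, hBA]
  ring

theorem cutWeight_erase_insert (hdiag : ∀ v, w v v = 0) {A B : Finset V} {x : V}
    (hxA : x ∈ A) (hxB : x ∉ B) :
    cutWeight w (A.erase x) (insert x B)
      = ∑ u ∈ A, w u x + (cutWeight w A B - ∑ v ∈ B, w x v) := by
  simp only [cutWeight, Finset.sum_insert hxB, Finset.sum_add_distrib]
  rw [Finset.sum_erase_eq_sub hxA, Finset.sum_erase_eq_sub hxA, hdiag, sub_zero]

theorem sum_cutWeight_erase_insert (hdiag : ∀ v, w v v = 0) {A B : Finset V}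
    (hd : Disjoint A B) :
    ∑ x ∈ A, cutWeight w (A.erase x) (insert x B)
      = innerWeight w A + (A.card - 1) * cutWeight w A B := by
  rw [Finset.sum_congr rfl fun x hx =>
      cutWeight_erase_insert hdiag hx (Finset.disjoint_left.mp hd hx),
    Finset.sum_add_distrib, Finset.sum_sub_distrib, Finset.sum_const, nsmul_eq_mul,
    innerWeight, Finset.sum_comm]
  simp only [cutWeight]
  ring

end Weights

namespace IsLocallyDensestCut

variable {V : Type} [DecidableEq V] {w : V → V → ℝ} {ε : ℝ} {A B : Finset V}

theorem symm (hsym : ∀ u v, w u v = w v u) (h : IsLocallyDensestCut w ε A B) :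
    IsLocallyDensestCut w ε B A := by
  intro x hx
  have h' := h x (by rwa [Finset.union_comm])
  rwa [cutWeight_comm hsym B A, cutWeight_comm hsym (symmDiffV B x), Finset.union_comm B A,
    mul_comm (B.card : ℝ), mul_comm ((symmDiffV B x).card : ℝ)]

theorem cutWeight_erase_insert_le (h : IsLocallyDensestCut w ε A B) (hd : Disjoint A B)
    (hA : 2 ≤ A.card) {x : V} (hxA : x ∈ A) :
    cutWeight w (A.erase x) (insert x B) ≤
      (1 + ε / (A.card + B.card)) * (cutWeight w A B / (A.card * B.card)) *
        ((A.card - 1) * (B.card + 1)) := by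
  have hxB : x ∉ B := Finset.disjoint_left.mp hd hxA
  have hx := h x (Finset.mem_union_left _ hxA)
  simp only [symmDiffV, if_pos hxA, if_neg hxB] at hx
  rw [Finset.card_erase_of_mem hxA, Finset.card_insert_of_notMem hxB,
    Finset.card_union_of_disjoint hd, Nat.cast_sub (by omega)] at hx
  push_cast at hx
  have hpos : (0 : ℝ) < (A.card - 1) * (B.card + 1) := by
    have : (2 : ℝ) ≤ A.card := by exact_mod_cast hA
    nlinarith
  exact (div_le_iff₀ hpos).mp hx

theorem card_mul_innerWeight_le (hnonneg : ∀ u v, 0 ≤ w u v) (hdiag : ∀ v, w v v = 0)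
    (hε : 0 ≤ ε) (h : IsLocallyDensestCut w ε A B) (hd : Disjoint A B)
    (hA : A.Nonempty) (hB : B.Nonempty) :
    B.card * innerWeight w A ≤ (A.card - 1) * (1 + ε) * cutWeight w A B := by
  obtain hA1 | hA2 : A.card = 1 ∨ 2 ≤ A.card := by have := hA.card_pos; omega
  · obtain ⟨x, rfl⟩ := Finset.card_eq_one.mp hA1
    simp [innerWeight_singleton hdiag]
  have ha : (2 : ℝ) ≤ A.card := by exact_mod_cast hA2
  have hb : (0 : ℝ) < B.card := by exact_mod_cast hB.card_pos
  have hc := cutWeight_nonneg hnonneg A B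
  have hsum : innerWeight w A + (A.card - 1) * cutWeight w A B ≤
      A.card * ((1 + ε / (A.card + B.card)) * (cutWeight w A B / (A.card * B.card)) *
        ((A.card - 1) * (B.card + 1))) := by
    rw [← sum_cutWeight_erase_insert hdiag hd, ← nsmul_eq_mul, ← Finset.sum_const]
    exact Finset.sum_le_sum fun x hx => h.cutWeight_erase_insert_le hd hA2 hx
  have hscaled : B.card * (innerWeight w A + (A.card - 1) * cutWeight w A B) ≤
      (A.card - 1) * cutWeight w A B * (B.card + 1 + ε * (B.card + 1) / (A.card + B.card)) := by
    calc _ ≤ B.card * (A.card * ((1 + ε / (A.card + B.card)) *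
          (cutWeight w A B / (A.card * B.card)) * ((A.card - 1) * (B.card + 1)))) :=
          mul_le_mul_of_nonneg_left hsum hb.le
      _ = _ := by field_simp
  have hmove : ε * (B.card + 1) / (A.card + B.card) ≤ ε := by
    rw [div_le_iff₀ (by linarith)]
    nlinarith
  nlinarith [mul_le_mul_of_nonneg_left hmove (by nlinarith : 0 ≤ (A.card - 1) * cutWeight w A B)]

end IsLocallyDensestCut

section DasguptaCost

variable {V : Type} [DecidableEq V] {w : V → V → ℝ}

theorem dasguptaCost_nonneg (hnonneg : ∀ u v, 0 ≤ w u v) :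
    ∀ s : ClusterTree V, 0 ≤ dasguptaCost w s
  | .leaf _ => le_rfl
  | .node L R => by
      have := cutWeight_nonneg hnonneg L.leaves R.leaves
      have := dasguptaCost_nonneg hnonneg L
      have := dasguptaCost_nonneg hnonneg R
      simp only [dasguptaCost]
      positivity

theorem dasguptaCost_le_card_mul_innerWeight (hsym : ∀ u v, w u v = w v u)
    (hnonneg : ∀ u v, 0 ≤ w u v) :
    ∀ s : ClusterTree V, s.leavesList.Nodup →
      dasguptaCost w s ≤ s.leaves.card * innerWeight w s.leaves / 2
  | .leaf v, _ => by
      simp only [dasguptaCost]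
      have := innerWeight_nonneg hnonneg (ClusterTree.leaf v).leaves
      positivity
  | .node L R, hnd => by
      obtain ⟨hndL, hndR, hd⟩ := ClusterTree.nodup_node hnd
      have hL := dasguptaCost_le_card_mul_innerWeight hsym hnonneg L hndL
      have hR := dasguptaCost_le_card_mul_innerWeight hsym hnonneg R hndR
      have := mul_nonneg (by linarith [R.one_le_card_leaves] : (0 : ℝ) ≤ R.leaves.card)
        (innerWeight_nonneg hnonneg L.leaves)
      have := mul_nonneg (by linarith [L.one_le_card_leaves] : (0 : ℝ) ≤ L.leaves.card)
        (innerWeight_nonneg hnonneg R.leaves)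
      rw [dasguptaCost, ClusterTree.card_leaves_node hd, ClusterTree.leaves_node,
        innerWeight_union hsym hd]
      push_cast
      nlinarith

/-- Inductive step of the lower bound, with `a, b` the sizes of the two sides, `iA, iB` their
inner weights and `c` the cut weight: merging raises the potential `(1 - ε)/3 · n · w(V(N))` by
`(1 - ε)/3 · (b·iA + a·iB + 2(a + b)c)`, and the cut term `(a + b)c` of the cost pays for it. -/
theorem potential_node_le {ε a b c iA iB : ℝ} (hε : 0 ≤ ε) (ha : 1 ≤ a) (hb : 1 ≤ b)
    (hc : 0 ≤ c) (hiA : 0 ≤ iA) (hiB : 0 ≤ iB)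
    (hA : b * iA ≤ (a - 1) * (1 + ε) * c) (hB : a * iB ≤ (b - 1) * (1 + ε) * c) :
    (1 - ε) / 3 * (a + b) * (iA + iB + 2 * c) ≤
      (1 - ε) / 3 * a * iA + (1 - ε) / 3 * b * iB + (a + b) * c := by
  have hmerge : (1 - ε) * (b * iA + a * iB + 2 * (a + b) * c) ≤ 3 * (a + b) * c := by
    rcases le_or_gt ε 1 with hε1 | hε1
    · have hsum : b * iA + a * iB + 2 * (a + b) * c ≤
          ((a + b - 2) * (1 + ε) + 2 * (a + b)) * c := by linarith
      calc (1 - ε) * (b * iA + a * iB + 2 * (a + b) * c)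
          ≤ (1 - ε) * (((a + b - 2) * (1 + ε) + 2 * (a + b)) * c) :=
            mul_le_mul_of_nonneg_left hsum (by linarith)
        _ ≤ 3 * (a + b) * c := by
            have : (1 - ε) * ((a + b - 2) * (1 + ε) + 2 * (a + b)) ≤ 3 * (a + b) := by
              nlinarith [mul_nonneg hε (by linarith : 0 ≤ a + b - 2)]
            nlinarith
    · have : 0 ≤ b * iA + a * iB + 2 * (a + b) * c := by positivity
      nlinarith
  nlinarith

theorem IsRecLocallyDensestCutTree.le_dasguptaCost (hsym : ∀ u v, w u v = w v u)
    (hnonneg : ∀ u v, 0 ≤ w u v) (hdiag : ∀ v, w v v = 0) {ε : ℝ} (hε : 0 ≤ ε)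
    {s : ClusterTree V} (hnd : s.leavesList.Nodup) (hrec : IsRecLocallyDensestCutTree w ε s) :
    (1 - ε) / 3 * s.leaves.card * innerWeight w s.leaves ≤ dasguptaCost w s := by
  induction s with
  | leaf v => simp [ClusterTree.leaves_leaf, innerWeight_singleton hdiag, dasguptaCost]
  | node L R ihL ihR =>
    obtain ⟨hcut, hrecL, hrecR⟩ := hrec
    obtain ⟨hndL, hndR, hd⟩ := ClusterTree.nodup_node hnd
    have hA := hcut.card_mul_innerWeight_le hnonneg hdiag hε hd
      L.leaves_nonempty R.leaves_nonempty
    have hB := (hcut.symm hsym).card_mul_innerWeight_le hnonneg hdiag hε hd.symm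
      R.leaves_nonempty L.leaves_nonempty
    rw [cutWeight_comm hsym] at hB
    have hstep := potential_node_le hε L.one_le_card_leaves R.one_le_card_leaves
      (cutWeight_nonneg hnonneg _ _) (innerWeight_nonneg hnonneg _)
      (innerWeight_nonneg hnonneg _) hA hB
    rw [dasguptaCost, ClusterTree.card_leaves_node hd, ClusterTree.leaves_node,
      innerWeight_union hsym hd]
    push_cast
    linarith [ihL hndL hrecL, ihR hndR hrecR]

end DasguptaCost

section ClusterTrees

variable {V : Type} [Fintype V] [DecidableEq V] {w : V → V → ℝ} {T : ClusterTree V}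

theorem IsClusterTree.innerWeight_leaves (hT : IsClusterTree T) :
    innerWeight w T.leaves = 2 * totalWeight w := by
  rw [hT.2, totalWeight, innerWeight]
  ring

theorem IsClusterTree.dasguptaCost_le (hsym : ∀ u v, w u v = w v u)
    (hnonneg : ∀ u v, 0 ≤ w u v) (hT : IsClusterTree T) :
    dasguptaCost w T ≤ Fintype.card V * totalWeight w := by
  have := dasguptaCost_le_card_mul_innerWeight hsym hnonneg T hT.1
  rwa [hT.innerWeight_leaves, hT.2, Finset.card_univ, mul_div_assoc,
    mul_div_cancel_left₀ _ two_ne_zero] at this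

end ClusterTrees

/-- Theorem 6, CKMM: the recursive locally-densest-cut algorithm
returns a tree of value at least `(2n/3)(1−ε) Σ_e w(e) ≥ (2/3)(1−ε) OPT`. -/
theorem statement7 {V : Type} [Fintype V] [DecidableEq V] (w : V → V → ℝ)
    (hsym : ∀ u v, w u v = w v u) (hnonneg : ∀ u v, 0 ≤ w u v) (hdiag : ∀ v, w v v = 0)
    (ε : ℝ) (hε : 0 < ε)
    (T : ClusterTree V) (hT : IsClusterTree T)
    (hrec : IsRecLocallyDensestCutTree w ε T) :
    2 * (Fintype.card V : ℝ) / 3 * (1 - ε) * totalWeight w ≤ dasguptaCost w T ∧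
    ∀ T' : ClusterTree V, IsClusterTree T' →
      2 / 3 * (1 - ε) * dasguptaCost w T' ≤ dasguptaCost w T := by
  have hlower : 2 * (Fintype.card V : ℝ) / 3 * (1 - ε) * totalWeight w ≤ dasguptaCost w T := by
    have := hrec.le_dasguptaCost hsym hnonneg hdiag hε.le hT.1
    rw [hT.innerWeight_leaves, hT.2, Finset.card_univ] at this
    linarith
  refine ⟨hlower, fun T' hT' => ?_⟩
  rcases le_or_gt ε 1 with hε1 | hε1
  · calc 2 / 3 * (1 - ε) * dasguptaCost w T'
        ≤ 2 / 3 * (1 - ε) * (Fintype.card V * totalWeight w) :=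
          mul_le_mul_of_nonneg_left (hT'.dasguptaCost_le hsym hnonneg) (by linarith)
      _ = 2 * (Fintype.card V : ℝ) / 3 * (1 - ε) * totalWeight w := by ring
      _ ≤ dasguptaCost w T := hlower
  · have := dasguptaCost_nonneg hnonneg T'
    nlinarith [dasguptaCost_nonneg hnonneg T]
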